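/- Secure derivation: if finite random variables (X,U,V,Y) satisfy the Markov chains X ↔ U ↔ V and U ↔ V ↔ Y, then 𝕂(U,V) ⊇ 𝕂(XU, YV). -/

import Mathlib

open Finset

open Classical in
/-- Probability that random variable `X` (on finite weighted space `p`) equals `a`. -/
noncomputable def prob {Ω α : Type*} [Fintype Ω] (p : Ω → ℝ) (X : Ω → α) (a : α) : ℝ :=
  ∑ ω, if X ω = a then p ω else 0

/-- Shannon entropy of a random variable. -/
noncomputable def ent {Ω α : Type*} [Fintype Ω] [Fintype α] (p : Ω → ℝ) (X : Ω → α) : ℝ :=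
  ∑ a, Real.negMulLog (prob p X a)

/-- Conditional entropy H(X|Y). -/
noncomputable def condEnt {Ω α β : Type*} [Fintype Ω] [Fintype α] [Fintype β]
    (p : Ω → ℝ) (X : Ω → α) (Y : Ω → β) : ℝ :=
  ent p (fun ω => (X ω, Y ω)) - ent p Y

/-- Mutual information I(X;Y). -/
noncomputable def mi {Ω α β : Type*} [Fintype Ω] [Fintype α] [Fintype β]
    (p : Ω → ℝ) (X : Ω → α) (Y : Ω → β) : ℝ :=
  ent p X + ent p Y - ent p (fun ω => (X ω, Y ω))

/-- Conditional mutual information I(X;Y|Z). -/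
noncomputable def cmi {Ω α β γ : Type*} [Fintype Ω] [Fintype α] [Fintype β] [Fintype γ]
    (p : Ω → ℝ) (X : Ω → α) (Y : Ω → β) (Z : Ω → γ) : ℝ :=
  ent p (fun ω => (X ω, Z ω)) + ent p (fun ω => (Y ω, Z ω))
    - ent p (fun ω => ((X ω, Y ω), Z ω)) - ent p Z

/-- `p` is a probability mass function. -/
def IsPMF {Ω : Type*} [Fintype Ω] (p : Ω → ℝ) : Prop :=
  (∀ ω, 0 ≤ p ω) ∧ ∑ ω, p ω = 1

/-- Bipartite graph on 𝒳 ⊔ 𝒴 with an edge between x and y iff the joint pmf μ(x,y) > 0. -/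
def edge {α β : Type*} (μ : α × β → ℝ) : α ⊕ β → α ⊕ β → Prop
  | Sum.inl x, Sum.inr y => 0 < μ (x, y)
  | Sum.inr y, Sum.inl x => 0 < μ (x, y)
  | _, _ => False


/-- Assisted-common-information region 𝕂 of a joint pmf μ on α × β: upward closure of
the triples (I(Q;B|A), I(Q;A|B), I(A;B|Q)) over all auxiliary finite random variables Q,
realized on the canonical space α × β × Fin m with (A,B)-marginal μ. -/
noncomputable def KRegion {α β : Type*} [Fintype α] [Fintype β] (μ : α × β → ℝ) :
    Set (ℝ × ℝ × ℝ) :=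
  { v | ∃ (m : ℕ) (ν : α × β × Fin m → ℝ),
      IsPMF ν ∧
      (∀ ab, prob ν (fun ω => (ω.1, ω.2.1)) ab = μ ab) ∧
      cmi ν (fun ω => ω.2.2) (fun ω => ω.2.1) (fun ω => ω.1) ≤ v.1 ∧
      cmi ν (fun ω => ω.2.2) (fun ω => ω.1) (fun ω => ω.2.1) ≤ v.2.1 ∧
      cmi ν (fun ω => ω.1) (fun ω => ω.2.1) (fun ω => ω.2.2) ≤ v.2.2 ∧
      0 ≤ v.1 ∧ 0 ≤ v.2.1 ∧ 0 ≤ v.2.2 }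
section Helpers

open Classical Real

variable {Ω Ω' α β γ δ κ τ : Type*} [Fintype Ω] [Fintype Ω']

lemma prob_nonneg {p : Ω → ℝ} (hp : ∀ ω, 0 ≤ p ω) (X : Ω → α) (a : α) :
    0 ≤ prob p X a := by
  unfold prob
  exact Finset.sum_nonneg fun ω _ => by split <;> simp [hp ω]

lemma sum_prob [Fintype α] (p : Ω → ℝ) (X : Ω → α) :
    ∑ a, prob p X a = ∑ ω, p ω := by
  unfold prob
  rw [Finset.sum_comm]
  refine Finset.sum_congr rfl fun ω _ => ?_
  simp

lemma prob_id (p : Ω → ℝ) (k : Ω) : prob p (fun ω => ω) k = p k := by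
  unfold prob; simp

lemma prob_comp [Fintype α] (p : Ω → ℝ) (X : Ω → α) (f : α → β) (b : β) :
    prob p (fun ω => f (X ω)) b = ∑ a, if f a = b then prob p X a else 0 := by
  unfold prob
  have h1 : ∀ a : α, (if f a = b then (∑ ω, if X ω = a then p ω else 0) else 0)
      = ∑ ω, if X ω = a ∧ f a = b then p ω else 0 := by
    intro a; split <;> simp_all
  simp only [h1]
  rw [Finset.sum_comm]
  refine Finset.sum_congr rfl fun ω _ => ?_
  simp only [ite_and]
  simp

lemma prob_comp_inj [Fintype α] (p : Ω → ℝ) (X : Ω → α) {f : α → β}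
    (hf : Function.Injective f) (k : α) :
    prob p (fun ω => f (X ω)) (f k) = prob p X k := by
  unfold prob
  refine Finset.sum_congr rfl fun ω _ => ?_
  simp [hf.eq_iff]

lemma prob_le_comp [Fintype α] {p : Ω → ℝ} (hp : ∀ ω, 0 ≤ p ω) (X : Ω → α)
    (f : α → β) (k : α) :
    prob p X k ≤ prob p (fun ω => f (X ω)) (f k) := by
  unfold prob
  refine Finset.sum_le_sum fun ω _ => ?_
  by_cases h : X ω = k
  · simp [h]
  · simp only [h, if_false]
    split <;> simp [hp ω]

lemma prob_transfer [Fintype κ] {p : Ω → ℝ} {q : Ω' → ℝ} {M : Ω → κ} {N : Ω' → κ}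
    (h : ∀ k, prob p M k = prob q N k) (f : κ → τ) (b : τ) :
    prob p (fun ω => f (M ω)) b = prob q (fun ω' => f (N ω')) b := by
  rw [prob_comp, prob_comp]
  exact Finset.sum_congr rfl fun k _ => by rw [h k]

lemma marg_sum [Fintype α] [Fintype β] (p : Ω → ℝ) (A : Ω → α) (C : Ω → β) (c : β) :
    ∑ a, prob p (fun ω => (A ω, C ω)) (a, c) = prob p C c := by
  unfold prob
  rw [Finset.sum_comm]
  refine Finset.sum_congr rfl fun ω _ => ?_
  simp only [Prod.mk.injEq, ite_and]
  simp

end Helpers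
section Helpers2
open Classical Real
variable {Ω Ω' α β γ δ κ τ : Type*} [Fintype Ω] [Fintype Ω']

lemma ent_comp [Fintype κ] [Fintype β] (p : Ω → ℝ) (X : Ω → κ) (f : κ → β) :
    ent p (fun ω => f (X ω))
      = ∑ k, prob p X k * (- Real.log (prob p (fun ω => f (X ω)) (f k))) := by
  unfold ent
  have key : ∀ b, Real.negMulLog (prob p (fun ω => f (X ω)) b)
      = ∑ k, (if f k = b then
          prob p X k * (- Real.log (prob p (fun ω => f (X ω)) (f k))) else 0) := by
    intro b
    have step : ∀ k : κ, (if f k = b then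
          prob p X k * (- Real.log (prob p (fun ω => f (X ω)) (f k))) else 0)
        = (if f k = b then prob p X k else 0)
            * (- Real.log (prob p (fun ω => f (X ω)) b)) := by
      intro k
      by_cases h : f k = b
      · subst h; simp
      · simp [h]
    simp only [step]
    rw [← Finset.sum_mul, ← prob_comp p X f b, Real.negMulLog]
    ring
  simp only [key]
  rw [Finset.sum_comm]
  refine Finset.sum_congr rfl fun k _ => ?_
  simp

lemma ent_comp_inj [Fintype κ] [Fintype β] (p : Ω → ℝ) (X : Ω → κ) {f : κ → β}
    (hf : Function.Injective f) :
    ent p (fun ω => f (X ω)) = ent p X := by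
  rw [ent_comp]
  unfold ent
  refine Finset.sum_congr rfl fun k _ => ?_
  rw [prob_comp_inj p X hf, Real.negMulLog]
  ring

lemma ent_inj [Fintype κ] [Fintype τ] (p : Ω → ℝ) (W : Ω → κ) (Z : Ω → τ)
    (f : κ → τ) (hf : Function.Injective f) (h : ∀ ω, Z ω = f (W ω)) :
    ent p Z = ent p W := by
  have hz : Z = fun ω => f (W ω) := funext h
  rw [hz]; exact ent_comp_inj p W hf

lemma ent_transfer [Fintype κ] [Fintype τ] {p : Ω → ℝ} {q : Ω' → ℝ}
    {M : Ω → κ} {N : Ω' → κ}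
    (h : ∀ k, prob p M k = prob q N k) (f : κ → τ) :
    ent p (fun ω => f (M ω)) = ent q (fun ω' => f (N ω')) := by
  unfold ent
  exact Finset.sum_congr rfl fun b _ => by rw [prob_transfer h f b]

lemma cmi_transfer [Fintype κ] [Fintype α] [Fintype β] [Fintype γ]
    {p : Ω → ℝ} {q : Ω' → ℝ} {M : Ω → κ} {N : Ω' → κ}
    (h : ∀ k, prob p M k = prob q N k) (f : κ → α) (g : κ → β) (e : κ → γ) :
    cmi p (fun ω => f (M ω)) (fun ω => g (M ω)) (fun ω => e (M ω))
      = cmi q (fun ω' => f (N ω')) (fun ω' => g (N ω')) (fun ω' => e (N ω')) := by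
  unfold cmi
  rw [ent_transfer h (fun k => (f k, e k)), ent_transfer h (fun k => (g k, e k)),
      ent_transfer h (fun k => ((f k, g k), e k)), ent_transfer h e]

end Helpers2
section Helpers3
open Classical Real
variable {Ω α β γ δ : Type*} [Fintype Ω] [Fintype α] [Fintype β] [Fintype γ] [Fintype δ]

private lemma inj_aux {κ τ : Type*} (f : κ → τ)
    (h : ∀ x y : κ, f x = f y → x = y) : Function.Injective f := h

lemma cmi_comm (p : Ω → ℝ) (A : Ω → α) (B : Ω → β) (C : Ω → γ) :
    cmi p A B C = cmi p B A C := by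
  unfold cmi
  have e : ent p (fun ω => ((B ω, A ω), C ω)) = ent p (fun ω => ((A ω, B ω), C ω)) :=
    ent_inj p _ _ (fun x => ((x.1.2, x.1.1), x.2))
      (fun x y h => by simp only [Prod.ext_iff] at h ⊢; tauto) (fun ω => rfl)
  rw [e]; ring

lemma cmi_chain (p : Ω → ℝ) (A : Ω → α) (B : Ω → β) (C : Ω → γ) (D : Ω → δ) :
    cmi p (fun ω => (A ω, B ω)) C D
      = cmi p B C D + cmi p A C (fun ω => (D ω, B ω)) := by
  unfold cmi
  have e1 : ent p (fun ω => (A ω, (D ω, B ω))) = ent p (fun ω => ((A ω, B ω), D ω)) :=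
    ent_inj p _ _ (fun x => (x.1.1, (x.2, x.1.2)))
      (fun x y h => by simp only [Prod.ext_iff] at h ⊢; tauto) (fun ω => rfl)
  have e2 : ent p (fun ω => (C ω, (D ω, B ω))) = ent p (fun ω => ((B ω, C ω), D ω)) :=
    ent_inj p _ _ (fun x => (x.1.2, (x.2, x.1.1)))
      (fun x y h => by simp only [Prod.ext_iff] at h ⊢; tauto) (fun ω => rfl)
  have e3 : ent p (fun ω => ((A ω, C ω), (D ω, B ω)))
      = ent p (fun ω => (((A ω, B ω), C ω), D ω)) :=
    ent_inj p _ _ (fun x => ((x.1.1.1, x.1.2), (x.2, x.1.1.2)))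
      (fun x y h => by simp only [Prod.ext_iff] at h ⊢; tauto) (fun ω => rfl)
  have e4 : ent p (fun ω => (D ω, B ω)) = ent p (fun ω => (B ω, D ω)) :=
    ent_inj p _ _ (fun x => (x.2, x.1))
      (fun x y h => by simp only [Prod.ext_iff] at h ⊢; tauto) (fun ω => rfl)
  rw [e1, e2, e3, e4]; ring

lemma cmi_chain₂ (p : Ω → ℝ) (C : Ω → γ) (A : Ω → α) (B : Ω → β) (D : Ω → δ) :
    cmi p C (fun ω => (A ω, B ω)) D
      = cmi p C B D + cmi p C A (fun ω => (D ω, B ω)) := by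
  rw [cmi_comm p C (fun ω => (A ω, B ω)) D, cmi_chain p A B C D,
      cmi_comm p B C D, cmi_comm p A C (fun ω => (D ω, B ω))]

lemma cmi_swap₃ (p : Ω → ℝ) (A : Ω → α) (B : Ω → β) (D : Ω → γ) (E : Ω → δ) :
    cmi p A B (fun ω => (D ω, E ω)) = cmi p A B (fun ω => (E ω, D ω)) := by
  unfold cmi
  have e1 : ent p (fun ω => (A ω, (D ω, E ω))) = ent p (fun ω => (A ω, (E ω, D ω))) :=
    ent_inj p _ _ (fun x => (x.1, (x.2.2, x.2.1)))
      (fun x y h => by simp only [Prod.ext_iff] at h ⊢; tauto) (fun ω => rfl)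
  have e2 : ent p (fun ω => (B ω, (D ω, E ω))) = ent p (fun ω => (B ω, (E ω, D ω))) :=
    ent_inj p _ _ (fun x => (x.1, (x.2.2, x.2.1)))
      (fun x y h => by simp only [Prod.ext_iff] at h ⊢; tauto) (fun ω => rfl)
  have e3 : ent p (fun ω => ((A ω, B ω), (D ω, E ω)))
      = ent p (fun ω => ((A ω, B ω), (E ω, D ω))) :=
    ent_inj p _ _ (fun x => (x.1, (x.2.2, x.2.1)))
      (fun x y h => by simp only [Prod.ext_iff] at h ⊢; tauto) (fun ω => rfl)
  have e4 : ent p (fun ω => (D ω, E ω)) = ent p (fun ω => (E ω, D ω)) :=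
    ent_inj p _ _ (fun x => (x.2, x.1))
      (fun x y h => by simp only [Prod.ext_iff] at h ⊢; tauto) (fun ω => rfl)
  rw [e1, e2, e3, e4]

end Helpers3
section Helpers4
open Classical Real
variable {Ω α β γ : Type*} [Fintype Ω] [Fintype α] [Fintype β] [Fintype γ]

lemma triple_sum_div (mAC : α × γ → ℝ) (mBC : β × γ → ℝ) (mC : γ → ℝ)
    (hmargA : ∀ c, ∑ a, mAC (a, c) = mC c) (hmargB : ∀ c, ∑ b, mBC (b, c) = mC c)
    (hmCsum : ∑ c, mC c = 1) :
    ∑ k : α × β × γ, mAC (k.1, k.2.2) * mBC (k.2.1, k.2.2) / mC k.2.2 ≤ 1 := by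
  have h1 : ∑ k : α × β × γ, mAC (k.1, k.2.2) * mBC (k.2.1, k.2.2) / mC k.2.2
      = ∑ a, ∑ b, ∑ c, mAC (a, c) * mBC (b, c) / mC c := by
    rw [Fintype.sum_prod_type]
    exact Finset.sum_congr rfl fun a _ => by rw [Fintype.sum_prod_type]
  have h2 : (∑ a, ∑ b, ∑ c, mAC (a, c) * mBC (b, c) / mC c)
      = ∑ c, ∑ a, ∑ b, mAC (a, c) * mBC (b, c) / mC c := by
    have h2a : (∑ a, ∑ b, ∑ c, mAC (a, c) * mBC (b, c) / mC c)
        = ∑ a, ∑ c, ∑ b, mAC (a, c) * mBC (b, c) / mC c :=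
      Finset.sum_congr rfl fun a _ => Finset.sum_comm
    rw [h2a]
    exact Finset.sum_comm
  have h3 : ∀ c, (∑ a, ∑ b, mAC (a, c) * mBC (b, c) / mC c)
      = mC c * mC c / mC c := by
    intro c
    have : (∑ a, ∑ b, mAC (a, c) * mBC (b, c) / mC c)
        = (∑ a, mAC (a, c)) * (∑ b, mBC (b, c)) / mC c := by
      rw [Finset.sum_mul_sum, Finset.sum_div]
      exact Finset.sum_congr rfl fun a _ => (Finset.sum_div _ _ _).symm
    rw [this, hmargA, hmargB]
  have h4 : ∀ c, mC c * mC c / mC c ≤ mC c := by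
    intro c
    rcases eq_or_ne (mC c) 0 with h | h
    · simp [h]
    · rw [mul_div_assoc, div_self h, mul_one]
  calc ∑ k : α × β × γ, mAC (k.1, k.2.2) * mBC (k.2.1, k.2.2) / mC k.2.2
      = ∑ c, ∑ a, ∑ b, mAC (a, c) * mBC (b, c) / mC c := by rw [h1, h2]
    _ = ∑ c, mC c * mC c / mC c := Finset.sum_congr rfl fun c _ => h3 c
    _ ≤ ∑ c, mC c := Finset.sum_le_sum fun c _ => h4 c
    _ = 1 := hmCsum

lemma sum_log_nonneg (J : α × β × γ → ℝ) (mAC : α × γ → ℝ) (mBC : β × γ → ℝ) (mC : γ → ℝ)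
    (hJ0 : ∀ k, 0 ≤ J k) (hJsum : ∑ k, J k = 1)
    (hJAC : ∀ k, J k ≤ mAC (k.1, k.2.2))
    (hJBC : ∀ k, J k ≤ mBC (k.2.1, k.2.2))
    (hJC : ∀ k, J k ≤ mC k.2.2)
    (hACnn : ∀ x, 0 ≤ mAC x) (hBCnn : ∀ x, 0 ≤ mBC x)
    (hmargA : ∀ c, ∑ a, mAC (a, c) = mC c) (hmargB : ∀ c, ∑ b, mBC (b, c) = mC c)
    (hmCsum : ∑ c, mC c = 1) :
    0 ≤ ∑ k : α × β × γ, J k * (Real.log (J k) + Real.log (mC k.2.2)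
        - Real.log (mAC (k.1, k.2.2)) - Real.log (mBC (k.2.1, k.2.2))) := by
  have hCnn : ∀ c : γ, 0 ≤ mC c := by
    intro c
    rw [← hmargA c]
    exact Finset.sum_nonneg fun a _ => hACnn _
  have key : ∀ k : α × β × γ,
      J k - mAC (k.1, k.2.2) * mBC (k.2.1, k.2.2) / mC k.2.2
        ≤ J k * (Real.log (J k) + Real.log (mC k.2.2)
            - Real.log (mAC (k.1, k.2.2)) - Real.log (mBC (k.2.1, k.2.2))) := by
    intro k
    have hGnn : 0 ≤ mAC (k.1, k.2.2) * mBC (k.2.1, k.2.2) / mC k.2.2 :=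
      div_nonneg (mul_nonneg (hACnn _) (hBCnn _)) (hCnn _)
    rcases (hJ0 k).eq_or_lt with h0 | hpos
    · rw [← h0]
      simp only [zero_mul, zero_sub]
      linarith
    · have hac : 0 < mAC (k.1, k.2.2) := lt_of_lt_of_le hpos (hJAC k)
      have hbc : 0 < mBC (k.2.1, k.2.2) := lt_of_lt_of_le hpos (hJBC k)
      have hc : 0 < mC k.2.2 := lt_of_lt_of_le hpos (hJC k)
      have hx : 0 < mAC (k.1, k.2.2) * mBC (k.2.1, k.2.2) / (J k * mC k.2.2) := by positivity
      have hlog := Real.log_le_sub_one_of_pos hx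
      have e : Real.log (J k) + Real.log (mC k.2.2)
            - Real.log (mAC (k.1, k.2.2)) - Real.log (mBC (k.2.1, k.2.2))
          = - Real.log (mAC (k.1, k.2.2) * mBC (k.2.1, k.2.2) / (J k * mC k.2.2)) := by
        rw [Real.log_div (mul_pos hac hbc).ne' (mul_pos hpos hc).ne',
            Real.log_mul hac.ne' hbc.ne', Real.log_mul hpos.ne' hc.ne']
        ring
      rw [e]
      have hJx : J k * (mAC (k.1, k.2.2) * mBC (k.2.1, k.2.2) / (J k * mC k.2.2))
          = mAC (k.1, k.2.2) * mBC (k.2.1, k.2.2) / mC k.2.2 := by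
        field_simp
      nlinarith [mul_le_mul_of_nonneg_left hlog (le_of_lt hpos)]
  have hsum := Finset.sum_le_sum (fun k (_ : k ∈ Finset.univ) => key k)
  rw [Finset.sum_sub_distrib, hJsum] at hsum
  have hGsum := triple_sum_div mAC mBC mC hmargA hmargB hmCsum
  linarith

end Helpers4
section Helpers5
open Classical Real
variable {Ω α β γ : Type*} [Fintype Ω] [Fintype α] [Fintype β] [Fintype γ]

lemma cmi_eq_sum (p : Ω → ℝ) (A : Ω → α) (B : Ω → β) (C : Ω → γ) :
    cmi p A B C = ∑ k : α × β × γ, prob p (fun ω => (A ω, B ω, C ω)) k *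
      (Real.log (prob p (fun ω => (A ω, B ω, C ω)) k) + Real.log (prob p C k.2.2)
        - Real.log (prob p (fun ω => (A ω, C ω)) (k.1, k.2.2))
        - Real.log (prob p (fun ω => (B ω, C ω)) (k.2.1, k.2.2))) := by
  have e1 : ent p (fun ω => (A ω, C ω)) = ∑ k : α × β × γ,
      prob p (fun ω => (A ω, B ω, C ω)) k *
        (- Real.log (prob p (fun ω => (A ω, C ω)) (k.1, k.2.2))) :=
    ent_comp p (fun ω => (A ω, B ω, C ω)) (fun k => (k.1, k.2.2))
  have e2 : ent p (fun ω => (B ω, C ω)) = ∑ k : α × β × γ,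
      prob p (fun ω => (A ω, B ω, C ω)) k *
        (- Real.log (prob p (fun ω => (B ω, C ω)) (k.2.1, k.2.2))) :=
    ent_comp p (fun ω => (A ω, B ω, C ω)) (fun k => (k.2.1, k.2.2))
  have e4 : ent p C = ∑ k : α × β × γ,
      prob p (fun ω => (A ω, B ω, C ω)) k * (- Real.log (prob p C k.2.2)) :=
    ent_comp p (fun ω => (A ω, B ω, C ω)) (fun k => k.2.2)
  have e3 : ent p (fun ω => ((A ω, B ω), C ω)) = ∑ k : α × β × γ,
      prob p (fun ω => (A ω, B ω, C ω)) k *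
        (- Real.log (prob p (fun ω => (A ω, B ω, C ω)) k)) := by
    have h : ent p (fun ω => ((A ω, B ω), C ω)) = ∑ k : α × β × γ,
        prob p (fun ω => (A ω, B ω, C ω)) k *
          (- Real.log (prob p (fun ω => ((A ω, B ω), C ω)) ((k.1, k.2.1), k.2.2))) :=
      ent_comp p (fun ω => (A ω, B ω, C ω)) (fun k => ((k.1, k.2.1), k.2.2))
    rw [h]
    refine Finset.sum_congr rfl fun k _ => ?_
    have hinj : Function.Injective (fun k : α × β × γ => ((k.1, k.2.1), k.2.2)) :=
      fun x y h => by simp only [Prod.ext_iff] at h ⊢; tauto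
    have hpc : prob p (fun ω => ((A ω, B ω), C ω)) ((k.1, k.2.1), k.2.2)
        = prob p (fun ω => (A ω, B ω, C ω)) k :=
      prob_comp_inj p (fun ω => (A ω, B ω, C ω)) hinj k
    rw [hpc]
  unfold cmi
  rw [e1, e2, e3, e4, ← Finset.sum_add_distrib, ← Finset.sum_sub_distrib,
    ← Finset.sum_sub_distrib]
  refine Finset.sum_congr rfl fun k _ => ?_
  ring

lemma cmi_nonneg {p : Ω → ℝ} (hp : IsPMF p) (A : Ω → α) (B : Ω → β) (C : Ω → γ) :
    0 ≤ cmi p A B C := by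
  rw [cmi_eq_sum p A B C]
  refine sum_log_nonneg _ _ _ _ (fun k => prob_nonneg hp.1 _ k) ?_ ?_ ?_ ?_
    (fun x => prob_nonneg hp.1 _ x) (fun x => prob_nonneg hp.1 _ x)
    (fun c => marg_sum p A C c) (fun c => marg_sum p B C c) ?_
  · rw [sum_prob]; exact hp.2
  · exact fun k => prob_le_comp hp.1 (fun ω => (A ω, B ω, C ω)) (fun k => (k.1, k.2.2)) k
  · exact fun k => prob_le_comp hp.1 (fun ω => (A ω, B ω, C ω)) (fun k => (k.2.1, k.2.2)) k
  · exact fun k => prob_le_comp hp.1 (fun ω => (A ω, B ω, C ω)) (fun k => k.2.2) k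
  · rw [sum_prob]; exact hp.2

end Helpers5
section Helpers6
open Classical Real
variable {Ω α β γ δ : Type*} [Fintype Ω] [Fintype α] [Fintype β] [Fintype γ] [Fintype δ]

lemma cmi_swap₁ (p : Ω → ℝ) (D : Ω → α) (E : Ω → β) (B : Ω → γ) (C : Ω → δ) :
    cmi p (fun ω => (D ω, E ω)) B C = cmi p (fun ω => (E ω, D ω)) B C := by
  unfold cmi
  have e1 : ent p (fun ω => ((E ω, D ω), C ω)) = ent p (fun ω => ((D ω, E ω), C ω)) :=
    ent_inj p _ _ (fun x => ((x.1.2, x.1.1), x.2))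
      (fun x y h => by simp only [Prod.ext_iff] at h ⊢; tauto) (fun ω => rfl)
  have e2 : ent p (fun ω => (((E ω, D ω), B ω), C ω))
      = ent p (fun ω => (((D ω, E ω), B ω), C ω)) :=
    ent_inj p _ _ (fun x => (((x.1.1.2, x.1.1.1), x.1.2), x.2))
      (fun x y h => by simp only [Prod.ext_iff] at h ⊢; tauto) (fun ω => rfl)
  rw [e1, e2]

end Helpers6
theorem stmt14 {Ω 𝒳 𝒰 𝒱 𝒴 : Type*} [Fintype Ω] [Fintype 𝒳] [Fintype 𝒰] [Fintype 𝒱]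
    [Fintype 𝒴]
    (p : Ω → ℝ) (hp : IsPMF p) (X : Ω → 𝒳) (U : Ω → 𝒰) (V : Ω → 𝒱) (Y : Ω → 𝒴)
    (hMarkov1 : cmi p X V U = 0) (hMarkov2 : cmi p U Y V = 0) :
    KRegion (fun ab => prob p (fun ω => ((X ω, U ω), (Y ω, V ω))) ab)
      ⊆ KRegion (fun ab => prob p (fun ω => (U ω, V ω)) ab) := by
  intro v hv
  obtain ⟨m, ν, hν, hmarg, h1, h2, h3, hv1, hv2, hv3⟩ := hv
  have hid : ∀ k, prob (fun k => prob ν (fun ω => (ω.1.2, ω.2.1.2, ω.2.2)) k)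
      (fun x => x) k = prob ν (fun ω => (ω.1.2, ω.2.1.2, ω.2.2)) k :=
    fun k => prob_id _ k
  refine ⟨m, fun k => prob ν (fun ω => (ω.1.2, ω.2.1.2, ω.2.2)) k,
    ⟨fun k => prob_nonneg hν.1 _ k,
      (sum_prob ν (fun ω => (ω.1.2, ω.2.1.2, ω.2.2))).trans hν.2⟩, ?_, ?_, ?_, ?_,
    hv1, hv2, hv3⟩
  · -- marginal condition
    intro ab
    have step1 : prob (fun k => prob ν (fun ω => (ω.1.2, ω.2.1.2, ω.2.2)) k)
        (fun ω => (ω.1, ω.2.1)) ab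
          = prob ν (fun ω => (ω.1.2, ω.2.1.2)) ab :=
      prob_transfer hid (fun z => (z.1, z.2.1)) ab
    have step2 : prob ν (fun ω => (ω.1.2, ω.2.1.2)) ab
        = prob p (fun ω => (U ω, V ω)) ab :=
      prob_transfer hmarg (fun z => (z.1.2, z.2.2)) ab
    exact step1.trans step2
  · -- I(Q;V|U) ≤ v.1
    have t1 : cmi (fun k => prob ν (fun ω => (ω.1.2, ω.2.1.2, ω.2.2)) k)
        (fun ω => ω.2.2) (fun ω => ω.2.1) (fun ω => ω.1)
        = cmi ν (fun ω => ω.2.2) (fun ω => ω.2.1.2) (fun ω => ω.1.2) :=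
      cmi_transfer hid (fun z => z.2.2) (fun z => z.2.1) (fun z => z.1)
    rw [t1]
    have mk1 : cmi ν (fun ω => ω.1.1) (fun ω => ω.2.1.2) (fun ω => ω.1.2) = 0 :=
      (cmi_transfer hmarg (fun z => z.1.1) (fun z => z.2.2) (fun z => z.1.2)).trans
        hMarkov1
    have ci : cmi ν (fun ω => (ω.2.2, ω.1.1)) (fun ω => ω.2.1.2) (fun ω => ω.1.2)
        = cmi ν (fun ω => ω.1.1) (fun ω => ω.2.1.2) (fun ω => ω.1.2)
          + cmi ν (fun ω => ω.2.2) (fun ω => ω.2.1.2) (fun ω => (ω.1.2, ω.1.1)) :=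
      cmi_chain ν _ _ _ _
    have cii : cmi ν (fun ω => (ω.1.1, ω.2.2)) (fun ω => ω.2.1.2) (fun ω => ω.1.2)
        = cmi ν (fun ω => ω.2.2) (fun ω => ω.2.1.2) (fun ω => ω.1.2)
          + cmi ν (fun ω => ω.1.1) (fun ω => ω.2.1.2) (fun ω => (ω.1.2, ω.2.2)) :=
      cmi_chain ν _ _ _ _
    have csw : cmi ν (fun ω => (ω.2.2, ω.1.1)) (fun ω => ω.2.1.2) (fun ω => ω.1.2)
        = cmi ν (fun ω => (ω.1.1, ω.2.2)) (fun ω => ω.2.1.2) (fun ω => ω.1.2) :=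
      cmi_swap₁ ν _ _ _ _
    have nn1 : 0 ≤ cmi ν (fun ω => ω.1.1) (fun ω => ω.2.1.2) (fun ω => (ω.1.2, ω.2.2)) :=
      cmi_nonneg hν _ _ _
    have s2 : cmi ν (fun ω => ω.2.2) (fun ω => ω.2.1.2) (fun ω => (ω.1.2, ω.1.1))
        = cmi ν (fun ω => ω.2.2) (fun ω => ω.2.1.2) (fun ω => (ω.1.1, ω.1.2)) :=
      cmi_swap₃ ν _ _ _ _
    have s3 : cmi ν (fun ω => ω.2.2) (fun ω => (ω.2.1.1, ω.2.1.2)) (fun ω => (ω.1.1, ω.1.2))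
        = cmi ν (fun ω => ω.2.2) (fun ω => ω.2.1.2) (fun ω => (ω.1.1, ω.1.2))
          + cmi ν (fun ω => ω.2.2) (fun ω => ω.2.1.1)
              (fun ω => ((ω.1.1, ω.1.2), ω.2.1.2)) :=
      cmi_chain₂ ν _ _ _ _
    have nn2 : 0 ≤ cmi ν (fun ω => ω.2.2) (fun ω => ω.2.1.1)
        (fun ω => ((ω.1.1, ω.1.2), ω.2.1.2)) := cmi_nonneg hν _ _ _
    have h1' : cmi ν (fun ω => ω.2.2) (fun ω => (ω.2.1.1, ω.2.1.2))
        (fun ω => (ω.1.1, ω.1.2)) ≤ v.1 := h1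
    linarith
  · -- I(Q;U|V) ≤ v.2.1
    have t2 : cmi (fun k => prob ν (fun ω => (ω.1.2, ω.2.1.2, ω.2.2)) k)
        (fun ω => ω.2.2) (fun ω => ω.1) (fun ω => ω.2.1)
        = cmi ν (fun ω => ω.2.2) (fun ω => ω.1.2) (fun ω => ω.2.1.2) :=
      cmi_transfer hid (fun z => z.2.2) (fun z => z.1) (fun z => z.2.1)
    rw [t2]
    have mk2 : cmi ν (fun ω => ω.2.1.1) (fun ω => ω.1.2) (fun ω => ω.2.1.2) = 0 :=
      (cmi_transfer hmarg (fun z => z.2.1) (fun z => z.1.2) (fun z => z.2.2)).trans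
        ((cmi_comm p Y U V).trans hMarkov2)
    have ci : cmi ν (fun ω => (ω.2.2, ω.2.1.1)) (fun ω => ω.1.2) (fun ω => ω.2.1.2)
        = cmi ν (fun ω => ω.2.1.1) (fun ω => ω.1.2) (fun ω => ω.2.1.2)
          + cmi ν (fun ω => ω.2.2) (fun ω => ω.1.2) (fun ω => (ω.2.1.2, ω.2.1.1)) :=
      cmi_chain ν _ _ _ _
    have cii : cmi ν (fun ω => (ω.2.1.1, ω.2.2)) (fun ω => ω.1.2) (fun ω => ω.2.1.2)
        = cmi ν (fun ω => ω.2.2) (fun ω => ω.1.2) (fun ω => ω.2.1.2)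
          + cmi ν (fun ω => ω.2.1.1) (fun ω => ω.1.2) (fun ω => (ω.2.1.2, ω.2.2)) :=
      cmi_chain ν _ _ _ _
    have csw : cmi ν (fun ω => (ω.2.2, ω.2.1.1)) (fun ω => ω.1.2) (fun ω => ω.2.1.2)
        = cmi ν (fun ω => (ω.2.1.1, ω.2.2)) (fun ω => ω.1.2) (fun ω => ω.2.1.2) :=
      cmi_swap₁ ν _ _ _ _
    have nn1 : 0 ≤ cmi ν (fun ω => ω.2.1.1) (fun ω => ω.1.2)
        (fun ω => (ω.2.1.2, ω.2.2)) := cmi_nonneg hν _ _ _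
    have s2 : cmi ν (fun ω => ω.2.2) (fun ω => ω.1.2) (fun ω => (ω.2.1.2, ω.2.1.1))
        = cmi ν (fun ω => ω.2.2) (fun ω => ω.1.2) (fun ω => (ω.2.1.1, ω.2.1.2)) :=
      cmi_swap₃ ν _ _ _ _
    have s3 : cmi ν (fun ω => ω.2.2) (fun ω => (ω.1.1, ω.1.2)) (fun ω => (ω.2.1.1, ω.2.1.2))
        = cmi ν (fun ω => ω.2.2) (fun ω => ω.1.2) (fun ω => (ω.2.1.1, ω.2.1.2))
          + cmi ν (fun ω => ω.2.2) (fun ω => ω.1.1)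
              (fun ω => ((ω.2.1.1, ω.2.1.2), ω.1.2)) :=
      cmi_chain₂ ν _ _ _ _
    have nn2 : 0 ≤ cmi ν (fun ω => ω.2.2) (fun ω => ω.1.1)
        (fun ω => ((ω.2.1.1, ω.2.1.2), ω.1.2)) := cmi_nonneg hν _ _ _
    have h2' : cmi ν (fun ω => ω.2.2) (fun ω => (ω.1.1, ω.1.2))
        (fun ω => (ω.2.1.1, ω.2.1.2)) ≤ v.2.1 := h2
    linarith
  · -- I(U;V|Q) ≤ v.2.2
    have t3 : cmi (fun k => prob ν (fun ω => (ω.1.2, ω.2.1.2, ω.2.2)) k)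
        (fun ω => ω.1) (fun ω => ω.2.1) (fun ω => ω.2.2)
        = cmi ν (fun ω => ω.1.2) (fun ω => ω.2.1.2) (fun ω => ω.2.2) :=
      cmi_transfer hid (fun z => z.1) (fun z => z.2.1) (fun z => z.2.2)
    rw [t3]
    have c1 : cmi ν (fun ω => (ω.1.1, ω.1.2)) (fun ω => (ω.2.1.1, ω.2.1.2)) (fun ω => ω.2.2)
        = cmi ν (fun ω => ω.1.2) (fun ω => (ω.2.1.1, ω.2.1.2)) (fun ω => ω.2.2)
          + cmi ν (fun ω => ω.1.1) (fun ω => (ω.2.1.1, ω.2.1.2))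
              (fun ω => (ω.2.2, ω.1.2)) :=
      cmi_chain ν _ _ _ _
    have nn1 : 0 ≤ cmi ν (fun ω => ω.1.1) (fun ω => (ω.2.1.1, ω.2.1.2))
        (fun ω => (ω.2.2, ω.1.2)) := cmi_nonneg hν _ _ _
    have c2 : cmi ν (fun ω => ω.1.2) (fun ω => (ω.2.1.1, ω.2.1.2)) (fun ω => ω.2.2)
        = cmi ν (fun ω => (ω.2.1.1, ω.2.1.2)) (fun ω => ω.1.2) (fun ω => ω.2.2) :=
      cmi_comm ν _ _ _
    have c3 : cmi ν (fun ω => (ω.2.1.1, ω.2.1.2)) (fun ω => ω.1.2) (fun ω => ω.2.2)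
        = cmi ν (fun ω => ω.2.1.2) (fun ω => ω.1.2) (fun ω => ω.2.2)
          + cmi ν (fun ω => ω.2.1.1) (fun ω => ω.1.2) (fun ω => (ω.2.2, ω.2.1.2)) :=
      cmi_chain ν _ _ _ _
    have nn2 : 0 ≤ cmi ν (fun ω => ω.2.1.1) (fun ω => ω.1.2)
        (fun ω => (ω.2.2, ω.2.1.2)) := cmi_nonneg hν _ _ _
    have c4 : cmi ν (fun ω => ω.2.1.2) (fun ω => ω.1.2) (fun ω => ω.2.2)
        = cmi ν (fun ω => ω.1.2) (fun ω => ω.2.1.2) (fun ω => ω.2.2) :=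
      cmi_comm ν _ _ _
    have h3' : cmi ν (fun ω => (ω.1.1, ω.1.2)) (fun ω => (ω.2.1.1, ω.2.1.2))
        (fun ω => ω.2.2) ≤ v.2.2 := h3
    linarith
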